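/- For every integer n ≥ 2, the (2n−1)-th root of 4·(1+d)^(2n−1)·√(4n−1)·(2n−1)! / (ζ(n)·λ(n)) is at most 6.24·(1+d) for all d ≥ 0, where ζ(n) = (n/2)!·((n−2)/2)! for even n and (((n−1)/2)!)² for odd n, and λ(2) = 1, λ(3) = 1/2, λ(n) = ((n−3)/2)!·((n−5)/2)!/4 for odd n ≥ 5, λ(n) = (((n−4)/2)!)²/4 for even n ≥ 4. -/
import Mathlib


open Real

/-- ζ(n) = (n/2)!·((n-2)/2)! for even n and (((n-1)/2)!)² for odd n. -/
noncomputable def paperZeta (n : ℕ) : ℝ :=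
  if Even n then (Nat.factorial (n / 2) : ℝ) * (Nat.factorial ((n - 2) / 2) : ℝ)
  else ((Nat.factorial ((n - 1) / 2) : ℝ)) ^ 2

/-- λ(2)=1, λ(3)=1/2, λ(n)=((n−3)/2)!·((n−5)/2)!/4 for odd n ≥ 5,
λ(n)=(((n−4)/2)!)²/4 for even n ≥ 4. -/
noncomputable def paperLambda (n : ℕ) : ℝ :=
  if n = 2 then 1
  else if n = 3 then 1 / 2
  else if Odd n then (Nat.factorial ((n - 3) / 2) : ℝ) * (Nat.factorial ((n - 5) / 2) : ℝ) / 4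
  else ((Nat.factorial ((n - 4) / 2) : ℝ)) ^ 2 / 4

lemma paperZeta_pos (n : ℕ) : 0 < paperZeta n := by
  unfold paperZeta; split <;> positivity

lemma paperLambda_pos (n : ℕ) : 0 < paperLambda n := by
  unfold paperLambda; split_ifs <;> positivity

lemma evenStep (j : ℕ) :
    625 ^ 4 * (8 * j + 31) * ((4 * j + 12) * (4 * j + 13) * (4 * j + 14) * (4 * j + 15)) ^ 2 ≤
      24336 ^ 4 * (8 * j + 23) * ((j + 4) * (j + 3) * (j + 2) ^ 2) ^ 2 :=
  calc 625 ^ 4 * (8 * j + 31) * ((4 * j + 12) * (4 * j + 13) * (4 * j + 14) * (4 * j + 15)) ^ 2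
      ≤ 625 ^ 4 * (8 * j + 31) * ((4 * j + 12) * (4 * j + 13) * (4 * j + 14) * (4 * j + 15)) ^ 2
        + (13510345484463255185472 + 51896664549039225651840 * j ^ 1 + 85377777636437692884288 * j ^ 2 + 79743142991303493403392 * j ^ 3 + 46869125370271137077504 * j ^ 4 + 18040978744045348943872 * j ^ 5 + 4558271572545851727872 * j ^ 6 + 730071929433054773248 * j ^ 7 + 67329106500081680384 * j ^ 8 + 2725994231159062528 * j ^ 9) := Nat.le_add_right _ _
    _ = 24336 ^ 4 * (8 * j + 23) * ((j + 4) * (j + 3) * (j + 2) ^ 2) ^ 2 := by ring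

lemma oddStep (j : ℕ) :
    625 ^ 4 * (8 * j + 27) * ((4 * j + 10) * (4 * j + 11) * (4 * j + 12) * (4 * j + 13)) ^ 2 ≤
      24336 ^ 4 * (8 * j + 19) * ((j + 3) ^ 2 * (j + 2) * (j + 1)) ^ 2 :=
  calc 625 ^ 4 * (8 * j + 27) * ((4 * j + 10) * (4 * j + 11) * (4 * j + 12) * (4 * j + 13)) ^ 2
      ≤ 625 ^ 4 * (8 * j + 27) * ((4 * j + 10) * (4 * j + 11) * (4 * j + 12) * (4 * j + 13)) ^ 2
        + (946051672205023615296 + 6498112804851680258688 * j ^ 1 + 15840415376630062827072 * j ^ 2 + 20261758279956667665664 * j ^ 3 + 15630211643215215060224 * j ^ 4 + 7691857607901823834112 * j ^ 5 + 2441491634256823033856 * j ^ 6 + 485289451513159614464 * j ^ 7 + 55062132459865899008 * j ^ 8 + 2725994231159062528 * j ^ 9) := Nat.le_add_right _ _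
    _ = 24336 ^ 4 * (8 * j + 19) * ((j + 3) ^ 2 * (j + 2) * (j + 1)) ^ 2 := by ring

lemma evenKey (j : ℕ) :
    256 * 625 ^ (4 * j + 11) * ((8 * j + 23) * (Nat.factorial (4 * j + 11)) ^ 2) ≤
      24336 ^ (4 * j + 11) *
        ((Nat.factorial (j + 3) * Nat.factorial (j + 2) * (Nat.factorial (j + 1)) ^ 2) ^ 2) := by
  induction j with
  | zero => norm_num [Nat.factorial]
  | succ j ih =>
    have hpos : 0 < 8 * j + 23 := by omega
    refine Nat.le_of_mul_le_mul_left ?_ hpos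
    have hf : Nat.factorial (4 * (j + 1) + 11) =
        Nat.factorial (4 * j + 11) * ((4 * j + 12) * (4 * j + 13) * (4 * j + 14) * (4 * j + 15)) := by
      have h : 4 * (j + 1) + 11 = (4 * j + 11) + 1 + 1 + 1 + 1 := by ring
      rw [h, Nat.factorial_succ, Nat.factorial_succ, Nat.factorial_succ, Nat.factorial_succ]
      ring
    have h4 : Nat.factorial (j + 1 + 3) = (j + 4) * Nat.factorial (j + 3) := Nat.factorial_succ (j + 3)
    have h3 : Nat.factorial (j + 3) = (j + 3) * Nat.factorial (j + 2) := Nat.factorial_succ (j + 2)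
    have h2 : Nat.factorial (j + 2) = (j + 2) * Nat.factorial (j + 1) := Nat.factorial_succ (j + 1)
    calc (8 * j + 23) * (256 * 625 ^ (4 * (j + 1) + 11) *
          ((8 * (j + 1) + 23) * (Nat.factorial (4 * (j + 1) + 11)) ^ 2))
        = (256 * 625 ^ (4 * j + 11) * ((8 * j + 23) * (Nat.factorial (4 * j + 11)) ^ 2)) *
            (625 ^ 4 * (8 * j + 31) *
              ((4 * j + 12) * (4 * j + 13) * (4 * j + 14) * (4 * j + 15)) ^ 2) := by
          rw [hf]; ring
      _ ≤ (24336 ^ (4 * j + 11) *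
            ((Nat.factorial (j + 3) * Nat.factorial (j + 2) * (Nat.factorial (j + 1)) ^ 2) ^ 2)) *
            (625 ^ 4 * (8 * j + 31) *
              ((4 * j + 12) * (4 * j + 13) * (4 * j + 14) * (4 * j + 15)) ^ 2) :=
          Nat.mul_le_mul_right _ ih
      _ ≤ (24336 ^ (4 * j + 11) *
            ((Nat.factorial (j + 3) * Nat.factorial (j + 2) * (Nat.factorial (j + 1)) ^ 2) ^ 2)) *
            (24336 ^ 4 * (8 * j + 23) * ((j + 4) * (j + 3) * (j + 2) ^ 2) ^ 2) :=
          Nat.mul_le_mul_left _ (evenStep j)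
      _ = (8 * j + 23) * (24336 ^ (4 * (j + 1) + 11) *
            ((Nat.factorial (j + 1 + 3) * Nat.factorial (j + 1 + 2) *
              (Nat.factorial (j + 1 + 1)) ^ 2) ^ 2)) := by
          rw [h4, h3, h2]; ring

lemma oddKey (j : ℕ) :
    256 * 625 ^ (4 * j + 9) * ((8 * j + 19) * (Nat.factorial (4 * j + 9)) ^ 2) ≤
      24336 ^ (4 * j + 9) *
        (((Nat.factorial (j + 2)) ^ 2 * Nat.factorial (j + 1) * Nat.factorial j) ^ 2) := by
  induction j with
  | zero => norm_num [Nat.factorial]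
  | succ j ih =>
    have hpos : 0 < 8 * j + 19 := by omega
    refine Nat.le_of_mul_le_mul_left ?_ hpos
    have hf : Nat.factorial (4 * (j + 1) + 9) =
        Nat.factorial (4 * j + 9) * ((4 * j + 10) * (4 * j + 11) * (4 * j + 12) * (4 * j + 13)) := by
      have h : 4 * (j + 1) + 9 = (4 * j + 9) + 1 + 1 + 1 + 1 := by ring
      rw [h, Nat.factorial_succ, Nat.factorial_succ, Nat.factorial_succ, Nat.factorial_succ]
      ring
    have h3 : Nat.factorial (j + 1 + 2) = (j + 3) * Nat.factorial (j + 2) := Nat.factorial_succ (j + 2)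
    have h2 : Nat.factorial (j + 2) = (j + 2) * Nat.factorial (j + 1) := Nat.factorial_succ (j + 1)
    have h1 : Nat.factorial (j + 1) = (j + 1) * Nat.factorial j := Nat.factorial_succ j
    calc (8 * j + 19) * (256 * 625 ^ (4 * (j + 1) + 9) *
          ((8 * (j + 1) + 19) * (Nat.factorial (4 * (j + 1) + 9)) ^ 2))
        = (256 * 625 ^ (4 * j + 9) * ((8 * j + 19) * (Nat.factorial (4 * j + 9)) ^ 2)) *
            (625 ^ 4 * (8 * j + 27) *
              ((4 * j + 10) * (4 * j + 11) * (4 * j + 12) * (4 * j + 13)) ^ 2) := by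
          rw [hf]; ring
      _ ≤ (24336 ^ (4 * j + 9) *
            (((Nat.factorial (j + 2)) ^ 2 * Nat.factorial (j + 1) * Nat.factorial j) ^ 2)) *
            (625 ^ 4 * (8 * j + 27) *
              ((4 * j + 10) * (4 * j + 11) * (4 * j + 12) * (4 * j + 13)) ^ 2) :=
          Nat.mul_le_mul_right _ ih
      _ ≤ (24336 ^ (4 * j + 9) *
            (((Nat.factorial (j + 2)) ^ 2 * Nat.factorial (j + 1) * Nat.factorial j) ^ 2)) *
            (24336 ^ 4 * (8 * j + 19) * ((j + 3) ^ 2 * (j + 2) * (j + 1)) ^ 2) :=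
          Nat.mul_le_mul_left _ (oddStep j)
      _ = (8 * j + 19) * (24336 ^ (4 * (j + 1) + 9) *
            (((Nat.factorial (j + 1 + 2)) ^ 2 * Nat.factorial (j + 1 + 1) *
              Nat.factorial (j + 1)) ^ 2)) := by
          rw [h3, h2, h1]; ring

lemma cast_helper (a b M : ℕ) (h : 256 * 625 ^ M * a ≤ 24336 ^ M * b) :
    16 * (a : ℝ) ≤ ((24336 : ℝ) / 625) ^ M * ((b : ℝ) / 16) := by
  have h' : (256 : ℝ) * 625 ^ M * a ≤ 24336 ^ M * b := by exact_mod_cast h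
  have h625 : (0 : ℝ) < (625 : ℝ) ^ M := by positivity
  rw [div_pow, div_mul_div_comm, le_div_iff₀ (by positivity)]
  nlinarith [h']

lemma keyIneq (n : ℕ) (hn : 2 ≤ n) :
    4 * Real.sqrt (4 * (n : ℝ) - 1) * (Nat.factorial (2 * n - 1) : ℝ) ≤
      6.24 ^ (2 * n - 1) * (paperZeta n * paperLambda n) := by
  have hn2 : (2 : ℝ) ≤ (n : ℝ) := by exact_mod_cast hn
  have hx : (0 : ℝ) ≤ 4 * (n : ℝ) - 1 := by linarith
  have hL : 0 ≤ 4 * Real.sqrt (4 * (n : ℝ) - 1) * (Nat.factorial (2 * n - 1) : ℝ) := by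
    positivity
  have hR : 0 ≤ 6.24 ^ (2 * n - 1) * (paperZeta n * paperLambda n) := by
    have := paperZeta_pos n
    have := paperLambda_pos n
    positivity
  have hsq : (4 * Real.sqrt (4 * (n : ℝ) - 1) * (Nat.factorial (2 * n - 1) : ℝ)) ^ 2 ≤
      (6.24 ^ (2 * n - 1) * (paperZeta n * paperLambda n)) ^ 2 := by
    have hL2 : (4 * Real.sqrt (4 * (n : ℝ) - 1) * (Nat.factorial (2 * n - 1) : ℝ)) ^ 2 =
        16 * (4 * (n : ℝ) - 1) * ((Nat.factorial (2 * n - 1) : ℝ)) ^ 2 := by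
      rw [mul_pow, mul_pow, Real.sq_sqrt hx]; ring
    have hR2 : (6.24 ^ (2 * n - 1) * (paperZeta n * paperLambda n)) ^ 2 =
        ((24336 : ℝ) / 625) ^ (2 * n - 1) * (paperZeta n * paperLambda n) ^ 2 := by
      rw [mul_pow, ← pow_mul, mul_comm (2 * n - 1) 2, pow_mul]
      norm_num
    rw [hL2, hR2]
    -- case analysis on n
    rcases Nat.even_or_odd n with ⟨m, hm⟩ | ⟨m, hm⟩
    · -- n = m + m
      subst hm
      match m, hn with
      | 1, _ =>
        simp only [paperZeta, paperLambda]
        norm_num [Nat.factorial]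
      | 2, _ =>
        norm_num [paperZeta, paperLambda, Nat.factorial, Nat.even_iff, Nat.odd_iff]
      | (j + 3), _ =>
        have e1 : 2 * ((j + 3) + (j + 3)) - 1 = 4 * j + 11 := by omega
        have hz : paperZeta ((j + 3) + (j + 3)) =
            (Nat.factorial (j + 3) : ℝ) * (Nat.factorial (j + 2) : ℝ) := by
          rw [paperZeta, if_pos ⟨j + 3, rfl⟩]
          have d1 : ((j + 3) + (j + 3)) / 2 = j + 3 := by omega
          have d2 : ((j + 3) + (j + 3) - 2) / 2 = j + 2 := by omega
          rw [d1, d2]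
        have hl : paperLambda ((j + 3) + (j + 3)) = ((Nat.factorial (j + 1) : ℝ)) ^ 2 / 4 := by
          rw [paperLambda, if_neg (by omega), if_neg (by omega),
            if_neg (by rw [Nat.odd_iff]; omega)]
          have d3 : ((j + 3) + (j + 3) - 4) / 2 = j + 1 := by omega
          rw [d3]
        rw [e1, hz, hl]
        have hcast := cast_helper ((8 * j + 23) * (Nat.factorial (4 * j + 11)) ^ 2)
          ((Nat.factorial (j + 3) * Nat.factorial (j + 2) * (Nat.factorial (j + 1)) ^ 2) ^ 2)
          (4 * j + 11) (evenKey j)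
        push_cast at hcast ⊢
        nlinarith [hcast]
    · -- n = 2 * m + 1
      subst hm
      match m, hn with
      | 1, _ =>
        simp only [paperZeta, paperLambda]
        norm_num [Nat.factorial]
      | (j + 2), _ =>
        have e1 : 2 * (2 * (j + 2) + 1) - 1 = 4 * j + 9 := by omega
        have hz : paperZeta (2 * (j + 2) + 1) = ((Nat.factorial (j + 2) : ℝ)) ^ 2 := by
          rw [paperZeta, if_neg (by rw [Nat.even_iff]; omega)]
          have d1 : (2 * (j + 2) + 1 - 1) / 2 = j + 2 := by omega
          rw [d1]
        have hl : paperLambda (2 * (j + 2) + 1) =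
            (Nat.factorial (j + 1) : ℝ) * (Nat.factorial j : ℝ) / 4 := by
          rw [paperLambda, if_neg (by omega), if_neg (by omega),
            if_pos (by rw [Nat.odd_iff]; omega)]
          have d2 : (2 * (j + 2) + 1 - 3) / 2 = j + 1 := by omega
          have d3 : (2 * (j + 2) + 1 - 5) / 2 = j := by omega
          rw [d2, d3]
        rw [e1, hz, hl]
        have hcast := cast_helper ((8 * j + 19) * (Nat.factorial (4 * j + 9)) ^ 2)
          (((Nat.factorial (j + 2)) ^ 2 * Nat.factorial (j + 1) * Nat.factorial j) ^ 2)
          (4 * j + 9) (oddKey j)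
        push_cast at hcast ⊢
        nlinarith [hcast]
  calc 4 * Real.sqrt (4 * (n : ℝ) - 1) * (Nat.factorial (2 * n - 1) : ℝ)
      = Real.sqrt ((4 * Real.sqrt (4 * (n : ℝ) - 1) * (Nat.factorial (2 * n - 1) : ℝ)) ^ 2) :=
        (Real.sqrt_sq hL).symm
    _ ≤ Real.sqrt ((6.24 ^ (2 * n - 1) * (paperZeta n * paperLambda n)) ^ 2) :=
        Real.sqrt_le_sqrt hsq
    _ = 6.24 ^ (2 * n - 1) * (paperZeta n * paperLambda n) := Real.sqrt_sq hR

theorem stmt_14 (n : ℕ) (hn : 2 ≤ n) (d : ℝ) (hd : 0 ≤ d) :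
    (4 * (1 + d) ^ (2 * n - 1) * Real.sqrt (4 * (n : ℝ) - 1) * (Nat.factorial (2 * n - 1) : ℝ) /
          (paperZeta n * paperLambda n)) ^ ((1 : ℝ) / (2 * (n : ℝ) - 1)) ≤
      6.24 * (1 + d) := by
  have hn2 : (2 : ℝ) ≤ (n : ℝ) := by exact_mod_cast hn
  have hmpos : (0 : ℝ) < 2 * (n : ℝ) - 1 := by linarith
  have hm : ((2 * n - 1 : ℕ) : ℝ) = 2 * (n : ℝ) - 1 := by
    have h1 : 1 ≤ 2 * n := by omega
    push_cast [Nat.cast_sub h1]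
    ring
  have hzpos : 0 < paperZeta n * paperLambda n :=
    mul_pos (paperZeta_pos n) (paperLambda_pos n)
  have h1d : (0 : ℝ) < 1 + d := by linarith
  have hkey := keyIneq n hn
  set F : ℝ := (Nat.factorial (2 * n - 1) : ℝ) with hF
  set S : ℝ := Real.sqrt (4 * (n : ℝ) - 1) with hS
  have hSnn : 0 ≤ S := Real.sqrt_nonneg _
  have hFnn : 0 ≤ F := by positivity
  have hC : 4 * S * F / (paperZeta n * paperLambda n) ≤ 6.24 ^ (2 * n - 1) :=
    (div_le_iff₀ hzpos).mpr (by linarith [hkey])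
  have hbase_eq : 4 * (1 + d) ^ (2 * n - 1) * S * F / (paperZeta n * paperLambda n) =
      (1 + d) ^ (2 * n - 1) * (4 * S * F / (paperZeta n * paperLambda n)) := by
    ring
  have hCnn : 0 ≤ 4 * S * F / (paperZeta n * paperLambda n) := by positivity
  have hbnn : 0 ≤ 4 * (1 + d) ^ (2 * n - 1) * S * F / (paperZeta n * paperLambda n) := by
    rw [hbase_eq]
    exact mul_nonneg (pow_nonneg h1d.le _) hCnn
  have hbound : 4 * (1 + d) ^ (2 * n - 1) * S * F / (paperZeta n * paperLambda n) ≤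
      (6.24 * (1 + d)) ^ (2 * n - 1) := by
    rw [hbase_eq]
    calc (1 + d) ^ (2 * n - 1) * (4 * S * F / (paperZeta n * paperLambda n))
        ≤ (1 + d) ^ (2 * n - 1) * 6.24 ^ (2 * n - 1) :=
          mul_le_mul_of_nonneg_left hC (pow_nonneg h1d.le _)
      _ = (6.24 * (1 + d)) ^ (2 * n - 1) := by rw [← mul_pow]; ring_nf
  have hynn : (0 : ℝ) ≤ 6.24 * (1 + d) := by linarith
  have hexp : (0 : ℝ) ≤ (1 : ℝ) / (2 * (n : ℝ) - 1) := by positivity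
  calc (4 * (1 + d) ^ (2 * n - 1) * S * F / (paperZeta n * paperLambda n)) ^
        ((1 : ℝ) / (2 * (n : ℝ) - 1))
      ≤ ((6.24 * (1 + d)) ^ (2 * n - 1)) ^ ((1 : ℝ) / (2 * (n : ℝ) - 1)) :=
        Real.rpow_le_rpow hbnn hbound hexp
    _ = 6.24 * (1 + d) := by
        rw [← Real.rpow_natCast (6.24 * (1 + d)) (2 * n - 1), ← Real.rpow_mul hynn, hm,
          mul_one_div_cancel hmpos.ne', Real.rpow_one]
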